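/- Let f : ℝⁿ → ℝ^d be any function, w ∈ ℝ^d, b ∈ ℝ, and let Σ be a positive semidefinite d×d matrix with wᵀΣw > 0. Let z be distributed as the centered multivariate Gaussian measure N(0, Σ) on ℝ^d. Fix x ∈ ℝⁿ, a label y ∈ {−1, 1}, an exponent p ∈ [1, ∞], a radius ε ≥ 0, and a constant Δ ≥ 0 such that |(wᵀf(x) + b) − (wᵀf(x + δ) + b)| ≤ Δ for every δ with ‖δ‖_p ≤ ε. Then for every δ with ‖δ‖_p ≤ ε, P_z( y·(wᵀ(f(x + δ) + z) + b) ≤ 0 ) − P_z( y·(wᵀ(f(x) + z) + b) ≤ 0 ) ≤ Δ / √(2π · wᵀΣw). -/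

import Mathlib

open MeasureTheory ProbabilityTheory Matrix
open scoped ENNReal

/-- The standard multivariate Gaussian `N(0, I_d)` on `ℝ^d`, as the product of `d`
standard real Gaussians. -/
noncomputable def stdGaussianPi (d : ℕ) : Measure (Fin d → ℝ) :=
  Measure.pi fun _ => gaussianReal 0 1

/-- The centered multivariate Gaussian `N(0, Σ)` on `ℝ^d` with positive semidefinite
covariance matrix `Σ`, as the pushforward of the standard Gaussian under `√Σ`. -/
noncomputable def multivariateGaussian {d : ℕ} {S : Matrix (Fin d) (Fin d) ℝ}
    (hS : S.PosSemidef) : Measure (Fin d → ℝ) :=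
  (stdGaussianPi d).map (fun u => ((hS.1.eigenvectorUnitary : Matrix (Fin d) (Fin d) ℝ) *
    diagonal ((RCLike.ofReal : ℝ → ℝ) ∘ Real.sqrt ∘ hS.1.eigenvalues) *
    (star hS.1.eigenvectorUnitary : Matrix (Fin d) (Fin d) ℝ)) *ᵥ u)

/-- The cumulative distribution function `Φ` of the standard real Gaussian:
`Φ t = (1/√(2π)) ∫_{-∞}^{t} exp (-s²/2) ds`. -/
noncomputable def stdGaussianCDF (t : ℝ) : ℝ :=
  (Real.sqrt (2 * Real.pi))⁻¹ * ∫ s in Set.Iic t, Real.exp (-s ^ 2 / 2)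
/-!
Along `y • w`, the noise `z ~ N(0, Σ)` is the real Gaussian `N(0, wᵀΣw)`, and the margin event
`y (wᵀ(g + z) + b) ≤ 0` says that this Gaussian lies below `-y (wᵀg + b)`. Replacing `g = f x` by
`f (x + δ)` moves the threshold by at most `Δ`, and the density of `N(0, V)` is at most `1/√(2πV)`.
-/

open scoped NNReal Real

section SqrtMatrix

variable {ι : Type*} [Fintype ι] [DecidableEq ι]

lemma Matrix.transpose_cfc (A : Matrix ι ι ℝ) (f : ℝ → ℝ) : (cfc f A)ᵀ = cfc f A := by
  rw [← conjTranspose_eq_transpose_of_trivial]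
  exact cfc_predicate f A

lemma Matrix.PosSemidef.cfc_sqrt_mul_self {S : Matrix ι ι ℝ} (hS : S.PosSemidef) :
    cfc Real.sqrt S * cfc Real.sqrt S = S := by
  have : IsSelfAdjoint S := hS.1
  calc cfc Real.sqrt S * cfc Real.sqrt S = cfc (fun x => √x * √x) S := (cfc_mul ..).symm
    _ = cfc id S := cfc_congr fun x hx => by
        rw [hS.1.spectrum_real_eq_range_eigenvalues] at hx
        obtain ⟨i, rfl⟩ := hx
        exact Real.mul_self_sqrt (hS.eigenvalues_nonneg i)
    _ = S := cfc_id ℝ S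

end SqrtMatrix

section GaussianLaws

variable {d : ℕ} {S : Matrix (Fin d) (Fin d) ℝ}

lemma multivariateGaussian_eq_map_cfc_sqrt (hS : S.PosSemidef) :
    multivariateGaussian hS = (stdGaussianPi d).map (cfc Real.sqrt S *ᵥ ·) := by
  rw [hS.1.cfc_eq, Matrix.IsHermitian.cfc, Unitary.conjStarAlgAut_apply]
  rfl

lemma map_dotProduct_stdGaussianPi (v : Fin d → ℝ) :
    (stdGaussianPi d).map (v ⬝ᵥ ·) = gaussianReal 0 (v ⬝ᵥ v).toNNReal := by
  have hL : (v ⬝ᵥ ·) = innerSL ℝ (WithLp.toLp 2 v) ∘ WithLp.toLp 2 := by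
    ext u; simp [dotProduct, PiLp.inner_apply, mul_comm]
  rw [stdGaussianPi, hL, ← Measure.map_map (by fun_prop) (by fun_prop), map_pi_eq_stdGaussian,
    IsGaussian.map_eq_gaussianReal, integral_strongDual_stdGaussian, variance_dual_stdGaussian,
    innerSL_apply_norm, EuclideanSpace.real_norm_sq_eq]
  simp [dotProduct, sq]

lemma map_dotProduct_multivariateGaussian (hS : S.PosSemidef) (u : Fin d → ℝ) :
    (multivariateGaussian hS).map (u ⬝ᵥ ·) = gaussianReal 0 (u ⬝ᵥ S *ᵥ u).toNNReal := by
  have hdot : (u ⬝ᵥ ·) ∘ (cfc Real.sqrt S *ᵥ ·) = (u ᵥ* cfc Real.sqrt S ⬝ᵥ ·) := by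
    ext z; exact dotProduct_mulVec u _ z
  have hvar : u ᵥ* cfc Real.sqrt S ⬝ᵥ u ᵥ* cfc Real.sqrt S = u ⬝ᵥ S *ᵥ u := by
    rw [← dotProduct_mulVec, ← vecMul_transpose, transpose_cfc, vecMul_vecMul,
      hS.cfc_sqrt_mul_self, dotProduct_mulVec, dotProduct_comm]
  rw [multivariateGaussian_eq_map_cfc_sqrt, Measure.map_map (by fun_prop) (by fun_prop), hdot,
    map_dotProduct_stdGaussianPi, hvar]

lemma multivariateGaussian_preimage_dotProduct (hS : S.PosSemidef) (u : Fin d → ℝ) {s : Set ℝ}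
    (hs : MeasurableSet s) :
    multivariateGaussian hS ((u ⬝ᵥ ·) ⁻¹' s) = gaussianReal 0 (u ⬝ᵥ S *ᵥ u).toNNReal s := by
  rw [← map_dotProduct_multivariateGaussian, Measure.map_apply (by fun_prop) hs]

end GaussianLaws

section GaussianReal

variable (μ : ℝ) {v : ℝ≥0}

lemma gaussianPDFReal_le_inv_sqrt (x : ℝ) :
    gaussianPDFReal μ v x ≤ (√(2 * π * v))⁻¹ := by
  rw [gaussianPDFReal]
  refine mul_le_of_le_one_right (by positivity) (Real.exp_le_one_iff.2 ?_)
  exact div_nonpos_of_nonpos_of_nonneg (neg_nonpos.2 (sq_nonneg _)) (by positivity)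

lemma gaussianReal_real_Ioc_le (hv : v ≠ 0) {a b : ℝ} (hab : a ≤ b) :
    (gaussianReal μ v).real (Set.Ioc a b) ≤ (b - a) / √(2 * π * v) := by
  rw [measureReal_def, gaussianReal_apply_eq_integral μ hv, ENNReal.toReal_ofReal
    (setIntegral_nonneg measurableSet_Ioc fun x _ => gaussianPDFReal_nonneg μ v x)]
  calc ∫ x in Set.Ioc a b, gaussianPDFReal μ v x ≤ ∫ _ in Set.Ioc a b, (√(2 * π * v))⁻¹ :=
        setIntegral_mono_on (integrable_gaussianPDFReal μ v).integrableOn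
          (integrableOn_const measure_Ioc_lt_top.ne) measurableSet_Ioc
          fun x _ => gaussianPDFReal_le_inv_sqrt μ x
    _ = (b - a) / √(2 * π * v) := by
        rw [setIntegral_const, measureReal_def, Real.volume_Ioc,
          ENNReal.toReal_ofReal (sub_nonneg.2 hab), smul_eq_mul, div_eq_mul_inv]

lemma gaussianReal_real_Iic_sub_le (hv : v ≠ 0) (a b : ℝ) :
    (gaussianReal μ v).real (Set.Iic b) - (gaussianReal μ v).real (Set.Iic a)
      ≤ |b - a| / √(2 * π * v) := by
  rcases le_total b a with hba | hab
  · have : (gaussianReal μ v).real (Set.Iic b) ≤ (gaussianReal μ v).real (Set.Iic a) :=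
      measureReal_mono (Set.Iic_subset_Iic.2 hba)
    have : 0 ≤ |b - a| / √(2 * π * v) := by positivity
    linarith
  · rw [← Set.Iic_union_Ioc_eq_Iic hab, measureReal_union (Set.Iic_disjoint_Ioc le_rfl)
      measurableSet_Ioc, add_sub_cancel_left, abs_of_nonneg (sub_nonneg.2 hab)]
    exact gaussianReal_real_Ioc_le μ hv hab

end GaussianReal

lemma setOf_mul_dotProduct_add_nonpos {d : ℕ} (w g : Fin d → ℝ) (b y : ℝ) :
    {z | y * (w ⬝ᵥ (g + z) + b) ≤ 0} = ((y • w) ⬝ᵥ ·) ⁻¹' Set.Iic (-(y * (w ⬝ᵥ g + b))) := by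
  ext z
  simp only [Set.mem_ofPred_eq, Set.mem_preimage, Set.mem_Iic, dotProduct_add, smul_dotProduct,
    smul_eq_mul]
  constructor <;> intro h <;> linarith

theorem statement0_general {n d : ℕ} (p : ℝ≥0∞)
    (f : PiLp p (fun _ : Fin n => ℝ) → (Fin d → ℝ)) (w : Fin d → ℝ) (b : ℝ)
    (S : Matrix (Fin d) (Fin d) ℝ) (hS : S.PosSemidef)
    (hw : 0 < w ⬝ᵥ (S *ᵥ w))
    (x : PiLp p (fun _ : Fin n => ℝ)) (y : ℝ) (hy : y = -1 ∨ y = 1)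
    (ε : ℝ) (Δ : ℝ)
    (hrobust : ∀ δ : PiLp p (fun _ : Fin n => ℝ), ‖δ‖ ≤ ε →
      |(w ⬝ᵥ f x + b) - (w ⬝ᵥ f (x + δ) + b)| ≤ Δ) :
    ∀ δ : PiLp p (fun _ : Fin n => ℝ), ‖δ‖ ≤ ε →
      (multivariateGaussian hS {z | y * (w ⬝ᵥ (f (x + δ) + z) + b) ≤ 0}).toReal -
        (multivariateGaussian hS {z | y * (w ⬝ᵥ (f x + z) + b) ≤ 0}).toReal ≤
      Δ / Real.sqrt (2 * Real.pi * (w ⬝ᵥ (S *ᵥ w))) := by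
  intro δ hδ
  have hy1 : |y| = 1 := by rcases hy with rfl | rfl <;> norm_num
  have hV : (w ⬝ᵥ S *ᵥ w).toNNReal ≠ 0 := by simpa using hw
  have hvar : (y • w) ⬝ᵥ S *ᵥ (y • w) = w ⬝ᵥ S *ᵥ w := by
    rw [mulVec_smul, smul_dotProduct, dotProduct_smul, smul_eq_mul, smul_eq_mul, ← mul_assoc,
      ← abs_mul_abs_self, hy1, one_mul, one_mul]
  rw [setOf_mul_dotProduct_add_nonpos, setOf_mul_dotProduct_add_nonpos,
    multivariateGaussian_preimage_dotProduct hS _ measurableSet_Iic,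
    multivariateGaussian_preimage_dotProduct hS _ measurableSet_Iic, hvar]
  calc _ ≤ |-(y * (w ⬝ᵥ f (x + δ) + b)) - -(y * (w ⬝ᵥ f x + b))| /
          √(2 * π * (w ⬝ᵥ S *ᵥ w).toNNReal) :=
        gaussianReal_real_Iic_sub_le 0 hV _ _
    _ ≤ Δ / √(2 * π * (w ⬝ᵥ S *ᵥ w)) := by
        rw [Real.coe_toNNReal _ hw.le]
        gcongr
        rw [neg_sub_neg, ← mul_sub, abs_mul, hy1, one_mul]
        exact hrobust δ hδ

theorem statement0 {n d : ℕ} (p : ℝ≥0∞) (hp : 1 ≤ p)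
    (f : PiLp p (fun _ : Fin n => ℝ) → (Fin d → ℝ)) (w : Fin d → ℝ) (b : ℝ)
    (S : Matrix (Fin d) (Fin d) ℝ) (hS : S.PosSemidef)
    (hw : 0 < w ⬝ᵥ (S *ᵥ w))
    (x : PiLp p (fun _ : Fin n => ℝ)) (y : ℝ) (hy : y = -1 ∨ y = 1)
    (ε : ℝ) (hε : 0 ≤ ε) (Δ : ℝ) (hΔ : 0 ≤ Δ)
    (hrobust : ∀ δ : PiLp p (fun _ : Fin n => ℝ), ‖δ‖ ≤ ε →
      |(w ⬝ᵥ f x + b) - (w ⬝ᵥ f (x + δ) + b)| ≤ Δ) :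
    ∀ δ : PiLp p (fun _ : Fin n => ℝ), ‖δ‖ ≤ ε →
      (multivariateGaussian hS {z | y * (w ⬝ᵥ (f (x + δ) + z) + b) ≤ 0}).toReal -
        (multivariateGaussian hS {z | y * (w ⬝ᵥ (f x + z) + b) ≤ 0}).toReal ≤
      Δ / Real.sqrt (2 * Real.pi * (w ⬝ᵥ (S *ᵥ w))) :=
  statement0_general p f w b S hS hw x y hy ε Δ hrobust
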